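/- arXiv:1307.4395 — 4 statements merged into one kernel-verified Lean document; each statement's English description precedes it below -/
import Mathlib

section
/- Let (M,d) be a metric space and (x_n) a sequence in M such that lim_{n→∞} d(x_n, x_{n+1}) = 0. If (x_n) is not a Cauchy sequence in M, then there exist ε₀ > 0 and strictly increasing sequences of positive integers (m(k)) and (n(k)) with m(k) > n(k) > k for all k, such that d(x_{m(k)}, x_{n(k)}) ≥ ε₀ and d(x_{m(k)−1}, x_{n(k)}) < ε₀ for all k, and moreover (i) lim_{k→∞} d(x_{m(k)−1}, x_{n(k)+1}) = ε₀, (ii) lim_{k→∞} d(x_{m(k)}, x_{n(k)}) = ε₀, and (iii) lim_{k→∞} d(x_{m(k)−1}, x_{n(k)}) = ε₀. -/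
/-!
Since `x` is not Cauchy there is an `ε₀ > 0` such that every index `N` is followed by some `m`
with `d(x_m, x_N) ≥ ε₀`; take the least such `m`, so that `d(x_{m-1}, x_N) < ε₀`. Chaining
`N ↦ m` gives the two increasing sequences. As `d(x_{m-1}, x_m) → 0` and `d(x_n, x_{n+1}) → 0`,
the triangle inequality traps all three distances in shrinking intervals around `ε₀`.
-/

open Filter Topology

section PseudoMetricSpace

variable {M : Type*} [PseudoMetricSpace M] {x : ℕ → M}

theorem exists_pos_forall_exists_lt_le_dist_of_not_cauchySeq (hx : ¬CauchySeq x) :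
    ∃ ε > 0, ∀ N, ∃ m > N, ε ≤ dist (x m) (x N) := by
  simp only [Metric.cauchySeq_iff', not_forall, not_exists, not_lt] at hx
  obtain ⟨ε, hε, hfar⟩ := hx
  refine ⟨ε, hε, fun N => ?_⟩
  obtain ⟨m, hNm, hm⟩ := hfar N
  refine ⟨m, hNm.lt_of_ne ?_, hm⟩
  rintro rfl
  rw [dist_self] at hm
  exact hm.not_gt hε

theorem exists_first_lt_le_dist {ε : ℝ} {N : ℕ} (hε : 0 < ε)
    (h : ∃ m > N, ε ≤ dist (x m) (x N)) :
    ∃ m > N, ε ≤ dist (x m) (x N) ∧ dist (x (m - 1)) (x N) < ε := by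
  classical
  obtain ⟨hNm, hfar⟩ := Nat.find_spec h
  refine ⟨Nat.find h, hNm, hfar, ?_⟩
  rcases (Nat.le_sub_one_of_lt hNm).eq_or_lt with heq | hlt
  · rwa [← heq, dist_self]
  · exact not_le.1 fun hle => Nat.find_min h (Nat.sub_one_lt_of_lt hNm) ⟨hlt, hle⟩

end PseudoMetricSpace

theorem exists_strictMono_and_strictMono_comp_of_lt_apply {f : ℕ → ℕ} (hf : ∀ n, n < f n) :
    ∃ φ : ℕ → ℕ, StrictMono φ ∧ StrictMono (f ∘ φ) ∧ ∀ k, k < φ k := by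
  have hiter : StrictMono fun k => f^[k] 0 := strictMono_nat_of_lt_succ fun k => by
    rw [Function.iterate_succ_apply']
    exact hf _
  refine ⟨fun k => f^[k + 1] 0, hiter.comp (strictMono_id.add_const 1), ?_,
    fun k => hiter.id_le (k + 1)⟩
  convert hiter.comp (strictMono_id.add_const 2) using 1
  exact funext fun k => (Function.iterate_succ_apply' f (k + 1) 0).symm

/-- Lemma of Babu and Sailaja: if `(x_n)` satisfies `d(x_n, x_{n+1}) → 0` but is not a Cauchy
sequence, then there exist `ε₀ > 0` and strictly increasing sequences of positive integers
`m(k) > n(k) > k` with `d(x_{m(k)}, x_{n(k)}) ≥ ε₀`, `d(x_{m(k)-1}, x_{n(k)}) < ε₀`, and the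
three stated limits all equal `ε₀`. -/
theorem not_cauchy_of_dist_succ_tendsto_zero {M : Type*} [MetricSpace M] (x : ℕ → M)
    (hdist : Tendsto (fun n => dist (x n) (x (n + 1))) atTop (𝓝 0))
    (hnotCauchy : ¬ CauchySeq x) :
    ∃ ε₀ > (0:ℝ), ∃ m n : ℕ → ℕ,
      StrictMono m ∧ StrictMono n ∧
      (∀ k, m k > n k ∧ n k > k) ∧
      (∀ k, dist (x (m k)) (x (n k)) ≥ ε₀) ∧
      (∀ k, dist (x (m k - 1)) (x (n k)) < ε₀) ∧
      Tendsto (fun k => dist (x (m k - 1)) (x (n k + 1))) atTop (𝓝 ε₀) ∧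
      Tendsto (fun k => dist (x (m k)) (x (n k))) atTop (𝓝 ε₀) ∧
      Tendsto (fun k => dist (x (m k - 1)) (x (n k))) atTop (𝓝 ε₀) := by
  obtain ⟨ε, hε, hfar⟩ := exists_pos_forall_exists_lt_le_dist_of_not_cauchySeq hnotCauchy
  choose f hf_gt hf_far hf_near using fun N => exists_first_lt_le_dist hε (hfar N)
  obtain ⟨n, hn, hm, hkn⟩ := exists_strictMono_and_strictMono_comp_of_lt_apply hf_gt
  have hstep_m : Tendsto (fun k => dist (x (f (n k) - 1)) (x (f (n k)))) atTop (𝓝 0) :=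
    ((tendsto_add_atTop_iff_nat (f := fun n => dist (x (n - 1)) (x n)) 1).1
      (by simpa using hdist)).comp hm.tendsto_atTop
  have hstep_n : Tendsto (fun k => dist (x (n k)) (x (n k + 1))) atTop (𝓝 0) :=
    hdist.comp hn.tendsto_atTop
  have hpred : Tendsto (fun k => dist (x (f (n k) - 1)) (x (n k))) atTop (𝓝 ε) := by
    refine tendsto_of_tendsto_of_tendsto_of_le_of_le (by simpa using tendsto_const_nhds.sub hstep_m)
      tendsto_const_nhds (fun k => ?_) (fun k => (hf_near (n k)).le)
    have := dist_triangle_left (x (f (n k))) (x (n k)) (x (f (n k) - 1))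
    linarith [hf_far (n k)]
  refine ⟨ε, hε, f ∘ n, n, hm, hn, fun k => ⟨hf_gt _, hkn k⟩, fun k => hf_far _, fun k => hf_near _,
    hpred.congr_dist ?_, hpred.congr_dist ?_, hpred⟩
  · exact squeeze_zero (fun _ => dist_nonneg) (fun _ => dist_dist_dist_le_right _ _ _) hstep_n
  · exact squeeze_zero (fun _ => dist_nonneg) (fun _ => dist_dist_dist_le_left _ _ _) hstep_m
end

section
/- Let S and T be two selfmaps on a metric space (M,d) such that the pair (S,T) is a ψ-(α,β,γ)-contraction pair. If S and T have a point of coincidence in M, then it is unique; that is, if Sx = Tx = z and Sv = Tv = w for some x, v ∈ M, then z = w. -/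
open Filter Set Topology

/-- An altering distance function `ψ : [0,∞) → [0,∞)`, modeled as a function on `ℝ`
whose relevant properties are stated on `[0,∞)`. -/
def AlteringDistance (ψ : ℝ → ℝ) : Prop :=
  (∀ t, 0 ≤ t → 0 ≤ ψ t) ∧
  (∀ t, 0 ≤ t → (ψ t = 0 ↔ t = 0)) ∧
  MonotoneOn ψ (Set.Ici 0) ∧
  ContinuousOn ψ (Set.Ici 0)

/-- Condition (*) on the contractive parameter functions `α, β, γ : [0,∞) → [0,1)`:
`α(t)+β(t)+γ(t) < 1` for all `t ≥ 0`, `limsup_{s→0⁺} γ(s) < 1`, and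
`limsup_{s→t⁺} (α(s)+β(s))/(1-γ(s)) < 1` for every `t > 0`. -/
def ParamCondition (α β γ : ℝ → ℝ) : Prop :=
  (∀ t, 0 ≤ t → 0 ≤ α t ∧ α t < 1) ∧
  (∀ t, 0 ≤ t → 0 ≤ β t ∧ β t < 1) ∧
  (∀ t, 0 ≤ t → 0 ≤ γ t ∧ γ t < 1) ∧
  (∀ t, 0 ≤ t → α t + β t + γ t < 1) ∧
  Filter.limsup γ (𝓝[>] (0:ℝ)) < 1 ∧
  (∀ t : ℝ, 0 < t →
    Filter.limsup (fun s => (α s + β s) / (1 - γ s)) (𝓝[>] t) < 1)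

/-- The pair `(S,T)` is a `ψ-(α,β,γ)`-contraction pair. -/
def ContractionPair {M : Type*} [MetricSpace M] (S T : M → M)
    (ψ α β γ : ℝ → ℝ) : Prop :=
  AlteringDistance ψ ∧ ParamCondition α β γ ∧
  ∀ x y : M,
    ψ (dist (S x) (S y)) ≤
      α (dist (T x) (T y)) * ψ (dist (T x) (T y)) +
      β (dist (T x) (T y)) * ψ (dist (S x) (T x)) +
      γ (dist (T x) (T y)) * ψ (dist (S y) (T y))

/-- If the pair `(S,T)` is a `ψ-(α,β,γ)`-contraction pair and `S` and `T` have a point of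
coincidence, then it is unique. -/
theorem poc_unique {M : Type*} [MetricSpace M] (S T : M → M) (ψ α β γ : ℝ → ℝ)
    (hST : ContractionPair S T ψ α β γ)
    (x v : M) (z w : M) (hx1 : S x = z) (hx2 : T x = z)
    (hv1 : S v = w) (hv2 : T v = w) : z = w := by
  obtain ⟨⟨hψ0, hψiff, _, _⟩, ⟨hα, hβ, hγ, _, _, _⟩, hC⟩ := hST
  have key := hC x v
  rw [hx1, hx2, hv1, hv2] at key
  have hzz : ψ (dist z z) = 0 := by
    rw [dist_self]; exact (hψiff 0 le_rfl).mpr rfl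
  have hww : ψ (dist w w) = 0 := by
    rw [dist_self]; exact (hψiff 0 le_rfl).mpr rfl
  rw [hzz, hww, mul_zero, mul_zero, add_zero, add_zero] at key
  by_contra hne
  have hd : 0 < dist z w := dist_pos.mpr hne
  have hψpos : 0 < ψ (dist z w) := by
    rcases lt_or_eq_of_le (hψ0 _ hd.le) with h | h
    · exact h
    · exact absurd ((hψiff _ hd.le).mp h.symm) (ne_of_gt hd)
  have := (hα (dist z w) dist_nonneg).2
  nlinarith
end

section
/- Let (M,d) be a metric space and S, T: M → M mappings with S(M) ⊆ T(M) such that the pair (S,T) is a ψ-(α,β,γ)-contraction pair. Then for any x₀ ∈ M there exists a sequence (x_n) in M with Sx_n = Tx_{n+1} for all n ≥ 0, and for any such sequence, setting y_n = Sx_n = Tx_{n+1}, one has lim_{n→∞} d(y_n, y_{n+1}) = 0. -/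
open Filter Set Topology

/-- If `S(M) ⊆ T(M)` and `(S,T)` is a `ψ-(α,β,γ)`-contraction pair, then for any `x₀` there
is a sequence with `S x_n = T x_{n+1}`, and for any such sequence the distances of consecutive
terms `y_n = S x_n` tend to `0`. -/
theorem dist_consecutive_tendsto_zero {M : Type*} [MetricSpace M] (S T : M → M)
    (ψ α β γ : ℝ → ℝ)
    (hrange : Set.range S ⊆ Set.range T)
    (hST : ContractionPair S T ψ α β γ) :
    (∀ x₀ : M, ∃ x : ℕ → M, x 0 = x₀ ∧ ∀ n : ℕ, S (x n) = T (x (n + 1))) ∧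
    (∀ x : ℕ → M, (∀ n : ℕ, S (x n) = T (x (n + 1))) →
      Tendsto (fun n => dist (S (x n)) (S (x (n + 1)))) atTop (𝓝 0)) := by
  obtain ⟨⟨hψ0, hψeq, hψmono, _⟩, ⟨hα, hβ, hγ, hsum, _, hls⟩, hcontr⟩ := hST
  constructor
  · -- existence of the sequence
    intro x₀
    have hch : ∀ y : M, ∃ z : M, T z = S y := fun y => hrange ⟨y, rfl⟩
    refine ⟨fun n => Nat.rec x₀ (fun _ xn => (hch xn).choose) n, rfl, fun n => ?_⟩
    exact ((hch _).choose_spec).symm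
  · intro x hx
    set d : ℕ → ℝ := fun n => dist (S (x n)) (S (x (n + 1))) with hd
    have hd0 : ∀ n, 0 ≤ d n := fun n => dist_nonneg
    set f : ℝ → ℝ := fun s => (α s + β s) / (1 - γ s) with hf
    have hf1 : ∀ s, 0 ≤ s → 0 ≤ f s ∧ f s < 1 := by
      intro s hs
      have h1 := (hα s hs).1
      have h2 := (hβ s hs).1
      have h3 := (hγ s hs)
      have hpos : 0 < 1 - γ s := by linarith [h3.2]
      constructor
      · exact div_nonneg (by linarith) hpos.le
      · rw [hf]; exact (div_lt_one hpos).2 (by linarith [hsum s hs])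
    have key : ∀ n, ψ (d (n+1)) ≤ (α (d n) + β (d n)) * ψ (d n) + γ (d n) * ψ (d (n+1)) := by
      intro n
      have h := hcontr (x (n+1)) (x (n+2))
      rw [← hx n, ← hx (n+1), dist_comm (S (x (n+1))) (S (x n)),
        dist_comm (S (x (n+2))) (S (x (n+1)))] at h
      have e1 : d (n+1) = dist (S (x (n+1))) (S (x (n+2))) := rfl
      have e0 : d n = dist (S (x n)) (S (x (n+1))) := rfl
      rw [e1, e0]
      linarith
    have hdec : ∀ n, d (n+1) ≤ d n := by
      intro n
      by_contra h
      push_neg at h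
      have hmono : ψ (d n) ≤ ψ (d (n+1)) := hψmono (hd0 n) (hd0 (n+1)) h.le
      have hs := hsum (d n) (hd0 n)
      have hαn := (hα (d n) (hd0 n)).1
      have hβn := (hβ (d n) (hd0 n)).1
      have hγn := (hγ (d n) (hd0 n)).1
      have hψ1 : 0 ≤ ψ (d (n+1)) := hψ0 _ (hd0 (n+1))
      have h0 : ψ (d (n+1)) = 0 := by nlinarith [key n]
      have : d (n+1) = 0 := (hψeq _ (hd0 (n+1))).1 h0
      have := hd0 n
      linarith
    have hanti : Antitone d := antitone_nat_of_succ_le hdec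
    have key2 : ∀ n, ψ (d (n+1)) ≤ f (d n) * ψ (d n) := by
      intro n
      have hγn := (hγ (d n) (hd0 n)).2
      have hpos : 0 < 1 - γ (d n) := by linarith
      rw [hf]
      rw [div_mul_eq_mul_div, le_div_iff₀ hpos]
      have := key n
      nlinarith
    have hbdd : BddBelow (Set.range d) := ⟨0, fun y ⟨n, hn⟩ => hn ▸ hd0 n⟩
    set r := ⨅ n, d n with hr
    have htend : Tendsto d atTop (𝓝 r) := tendsto_atTop_ciInf hanti hbdd
    have hr0 : 0 ≤ r := le_ciInf hd0
    have hrle : ∀ n, r ≤ d n := fun n => ciInf_le hbdd n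
    have hrz : r = 0 := by
      by_contra hne
      have hrpos : 0 < r := lt_of_le_of_ne hr0 (Ne.symm hne)
      have hψr : 0 < ψ r :=
        lt_of_le_of_ne (hψ0 r hr0) (fun h => hne ((hψeq r hr0).1 h.symm))
      by_cases hex : ∃ n, d n = r
      · obtain ⟨n, hn⟩ := hex
        have h1 : ψ (d (n+1)) ≤ f r * ψ r := hn ▸ key2 n
        have h2 : f r * ψ r < 1 * ψ r :=
          mul_lt_mul_of_pos_right (hf1 r hr0).2 hψr
        have h3 : ψ r ≤ ψ (d (n+1)) := hψmono hr0 (hd0 _) (hrle (n+1))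
        linarith
      · push_neg at hex
        have hgt : ∀ n, r < d n := fun n => lt_of_le_of_ne (hrle n) (Ne.symm (hex n))
        have htend' : Tendsto d atTop (𝓝[>] r) :=
          tendsto_nhdsWithin_of_tendsto_nhds_of_eventually_within d htend
            (Eventually.of_forall hgt)
        have hL : limsup f (𝓝[>] r) < 1 := hls r hrpos
        set c : ℝ := (max (limsup f (𝓝[>] r)) 0 + 1) / 2 with hc
        have hm1 : max (limsup f (𝓝[>] r)) 0 < 1 := max_lt hL one_pos
        have hc1 : c < 1 := by rw [hc]; linarith
        have hc0 : 0 ≤ c := by rw [hc]; positivity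
        have hLc : limsup f (𝓝[>] r) < c := by
          have h := le_max_left (limsup f (𝓝[>] r)) 0
          rw [hc]; linarith
        have hbddf : IsBoundedUnder (· ≤ ·) (𝓝[>] r) f := by
          refine ⟨1, eventually_map.mpr ?_⟩
          filter_upwards [self_mem_nhdsWithin] with s hs
          exact (hf1 s (le_of_lt (lt_trans hrpos hs))).2.le
        have hev : ∀ᶠ s in 𝓝[>] r, f s < c := eventually_lt_of_limsup_lt hLc hbddf
        have hevn : ∀ᶠ n in atTop, f (d n) < c := htend'.eventually hev
        obtain ⟨N, hN⟩ := hevn.exists_forall_of_atTop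
        have hgeo : ∀ k, ψ (d (N + k)) ≤ c ^ k * ψ (d N) := by
          intro k
          induction k with
          | zero => simp
          | succ k ih =>
            have h1 : ψ (d (N + k + 1)) ≤ f (d (N + k)) * ψ (d (N + k)) := key2 _
            have h2 : f (d (N + k)) * ψ (d (N + k)) ≤ c * ψ (d (N + k)) :=
              mul_le_mul_of_nonneg_right (hN _ (Nat.le_add_right N k)).le (hψ0 _ (hd0 _))
            have h3 : c * ψ (d (N + k)) ≤ c * (c ^ k * ψ (d N)) :=
              mul_le_mul_of_nonneg_left ih hc0
            have e : N + (k + 1) = N + k + 1 := rfl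
            rw [e]
            calc ψ (d (N + k + 1)) ≤ c * (c ^ k * ψ (d N)) := le_trans h1 (le_trans h2 h3)
              _ = c ^ (k + 1) * ψ (d N) := by ring
        have hlim : Tendsto (fun k => c ^ k * ψ (d N)) atTop (𝓝 0) := by
          simpa using (tendsto_pow_atTop_nhds_zero_of_lt_one hc0 hc1).mul_const (ψ (d N))
        have : ψ r ≤ 0 := by
          apply ge_of_tendsto' hlim
          intro k
          exact le_trans (hψmono hr0 (hd0 _) (hrle (N + k))) (hgeo k)
        linarith
    rw [hrz] at htend
    exact htend
end

section
/- Let (M,d) be a metric space and S, T: M → M mappings with S(M) ⊆ T(M) such that the pair (S,T) is a ψ-(α,β,γ)-contraction pair. Then for any sequence (x_n) in M satisfying Sx_n = Tx_{n+1} for all n ≥ 0, the sequence (y_n) defined by y_n = Sx_n = Tx_{n+1} is a Cauchy sequence in M. -/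
open Filter Set Topology

/-! Write `y n = S (x n)`, so that `T (x (n + 1)) = y n` and the contraction inequality for the
pair `(x (a + 1), x (b + 1))` is an inequality between distances of points of `y` alone. For
consecutive distances `Dₙ` it gives `ψ Dₙ₊₁ ≤ q(Dₙ) ψ Dₙ` with `q = (α + β)/(1 - γ) < 1`, so `Dₙ`
decreases to some `t`, and `t > 0` is ruled out by passing to the limit with the uniform bound
`q < c < 1` near `t` supplied by condition (*). If `y` were not Cauchy, one would find `ε > 0` and
indices `k ≤ bₖ` with `d(yₖ, y_{bₖ}) ↓ ε`; the same limiting argument applied to the contraction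
inequality at `(k, bₖ)` yields `ψ ε ≤ c ψ ε`, a contradiction. -/

namespace AlteringDistance

variable {ψ : ℝ → ℝ} {s t : ℝ}

theorem nonneg (hψ : AlteringDistance ψ) (ht : 0 ≤ t) : 0 ≤ ψ t := hψ.1 t ht

theorem map_zero (hψ : AlteringDistance ψ) : ψ 0 = 0 := (hψ.2.1 0 le_rfl).2 rfl

theorem pos (hψ : AlteringDistance ψ) (ht : 0 < t) : 0 < ψ t :=
  (hψ.nonneg ht.le).lt_of_ne fun h => ht.ne' ((hψ.2.1 t ht.le).1 h.symm)

theorem mono (hψ : AlteringDistance ψ) (hs : 0 ≤ s) (hst : s ≤ t) : ψ s ≤ ψ t :=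
  hψ.2.2.1 hs (hs.trans hst) hst

theorem eq_zero_of_le_mul {c : ℝ} (hψ : AlteringDistance ψ) (ht : 0 ≤ t) (hc : c < 1)
    (h : ψ t ≤ c * ψ t) : t = 0 := by
  by_contra ht0
  nlinarith [hψ.pos (ht.lt_of_ne' ht0)]

theorem tendsto_comp {ι : Type*} {l : Filter ι} {u : ι → ℝ} (hψ : AlteringDistance ψ)
    (hu0 : ∀ i, 0 ≤ u i) (ht : 0 ≤ t) (hu : Tendsto u l (𝓝 t)) :
    Tendsto (fun i => ψ (u i)) l (𝓝 (ψ t)) :=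
  (hψ.2.2.2 t ht).tendsto.comp (tendsto_nhdsWithin_of_tendsto_nhds_of_eventually_within _ hu
    (Eventually.of_forall hu0))

end AlteringDistance

noncomputable def contractionRatio (α β γ : ℝ → ℝ) (s : ℝ) : ℝ := (α s + β s) / (1 - γ s)

namespace ParamCondition

variable {α β γ : ℝ → ℝ} {s t : ℝ}

theorem one_sub_pos (hp : ParamCondition α β γ) (hs : 0 ≤ s) : 0 < 1 - γ s := by
  linarith [(hp.2.2.1 s hs).2]

theorem contractionRatio_lt_one (hp : ParamCondition α β γ) (hs : 0 ≤ s) :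
    contractionRatio α β γ s < 1 :=
  (div_lt_one (hp.one_sub_pos hs)).2 (by linarith [hp.2.2.2.1 s hs])

theorem le_contractionRatio (hp : ParamCondition α β γ) (hs : 0 ≤ s) :
    α s ≤ contractionRatio α β γ s :=
  calc α s ≤ α s + β s := le_add_of_nonneg_right (hp.2.1 s hs).1
    _ ≤ contractionRatio α β γ s :=
      le_div_self (add_nonneg (hp.1 s hs).1 (hp.2.1 s hs).1) (hp.one_sub_pos hs)
        (by linarith [(hp.2.2.1 s hs).1])

theorem exists_contractionRatio_le (hp : ParamCondition α β γ) (ht : 0 < t) :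
    ∃ c < 1, ∀ᶠ s in 𝓝[≥] t, contractionRatio α β γ s ≤ c := by
  have hbdd : IsBoundedUnder (· ≤ ·) (𝓝[>] t) (contractionRatio α β γ) :=
    isBoundedUnder_of_eventually_le <| eventually_nhdsWithin_of_forall fun s hs =>
      (hp.contractionRatio_lt_one (ht.trans hs).le).le
  obtain ⟨c, hlim, hc⟩ := exists_between (hp.2.2.2.2.2 t ht)
  refine ⟨max c (contractionRatio α β γ t), max_lt hc (hp.contractionRatio_lt_one ht.le), ?_⟩
  rw [← nhdsGT_sup_nhdsWithin_singleton, nhdsWithin_singleton, eventually_sup, eventually_pure]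
  exact ⟨(eventually_lt_of_limsup_lt hlim hbdd).mono fun s hs => hs.le.trans (le_max_left _ _),
    le_max_right _ _⟩

end ParamCondition

section Recursion

variable {ψ q : ℝ → ℝ} {D : ℕ → ℝ}

theorem antitone_of_le_mul (hψ : AlteringDistance ψ) (hq : ∀ s, 0 ≤ s → q s < 1)
    (hD : ∀ n, 0 ≤ D n) (hrec : ∀ n, ψ (D (n + 1)) ≤ q (D n) * ψ (D n)) : Antitone D := by
  refine antitone_nat_of_succ_le fun n => le_of_not_gt fun hlt => ?_
  have hle : ψ (D n) ≤ ψ (D (n + 1)) := hψ.mono (hD n) hlt.le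
  have hpos : 0 < ψ (D (n + 1)) := hψ.pos ((hD n).trans_lt hlt)
  have hq1 := hq _ (hD n)
  rcases le_or_gt 0 (q (D n)) with hq0 | hq0
  · nlinarith [hrec n, mul_le_mul_of_nonneg_left hle hq0]
  · nlinarith [hrec n, hψ.nonneg (hD n)]

theorem tendsto_zero_of_le_mul (hψ : AlteringDistance ψ) (hq : ∀ s, 0 ≤ s → q s < 1)
    (hq_loc : ∀ t, 0 < t → ∃ c < 1, ∀ᶠ s in 𝓝[≥] t, q s ≤ c)
    (hD : ∀ n, 0 ≤ D n) (hrec : ∀ n, ψ (D (n + 1)) ≤ q (D n) * ψ (D n)) :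
    Tendsto D atTop (𝓝 0) := by
  have hanti := antitone_of_le_mul hψ hq hD hrec
  have hbdd : BddBelow (range D) := ⟨0, by rintro _ ⟨n, rfl⟩; exact hD n⟩
  set t := ⨅ n, D n
  have hlim : Tendsto D atTop (𝓝 t) := tendsto_atTop_ciInf hanti hbdd
  have ht : 0 ≤ t := le_ciInf hD
  suffices t = 0 by rwa [this] at hlim
  by_contra ht0
  obtain ⟨c, hc, hqc⟩ := hq_loc t (ht.lt_of_ne' ht0)
  have hlim' : Tendsto D atTop (𝓝[≥] t) :=
    tendsto_nhdsWithin_of_tendsto_nhds_of_eventually_within _ hlim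
      (Eventually.of_forall fun n => ciInf_le hbdd n)
  have hψlim := hψ.tendsto_comp hD ht hlim
  refine ht0 (hψ.eq_zero_of_le_mul ht hc (le_of_tendsto_of_tendsto
    (hψlim.comp (tendsto_add_atTop_nat 1)) (hψlim.const_mul c) ?_))
  filter_upwards [hlim'.eventually hqc] with n hn
  exact (hrec n).trans (mul_le_mul_of_nonneg_right hn (hψ.nonneg (hD n)))

end Recursion

theorem exists_le_lt_succ {u : ℕ → ℝ} {r : ℝ} (h0 : u 0 ≤ r) (h : ∃ n, r < u n) :
    ∃ j, u j ≤ r ∧ r < u (j + 1) := by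
  classical
  have hfind : Nat.find h ≠ 0 := fun h' => (Nat.find_spec h).not_ge (h' ▸ h0)
  obtain ⟨j, hj⟩ := Nat.exists_eq_add_one_of_ne_zero hfind
  refine ⟨j, not_lt.1 (Nat.find_min h (by omega)), ?_⟩
  rw [← hj]
  exact Nat.find_spec h

section MetricSpace

variable {M : Type*} [MetricSpace M]

theorem tendsto_dist_of_tendsto_dist_zero {ι : Type*} {l : Filter ι} {u v u' v' : ι → M}
    {ε : ℝ} (hu : Tendsto (fun i => dist (u i) (u' i)) l (𝓝 0))
    (hv : Tendsto (fun i => dist (v i) (v' i)) l (𝓝 0))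
    (h : Tendsto (fun i => dist (u i) (v i)) l (𝓝 ε)) :
    Tendsto (fun i => dist (u' i) (v' i)) l (𝓝 ε) := by
  rw [tendsto_iff_dist_tendsto_zero] at h ⊢
  refine squeeze_zero (fun _ => dist_nonneg) (fun i => ?_) (by simpa using (hu.add hv).add h)
  calc dist (dist (u' i) (v' i)) ε
      ≤ dist (dist (u' i) (v' i)) (dist (u i) (v i)) + dist (dist (u i) (v i)) ε :=
        dist_triangle _ _ _
    _ ≤ dist (u i) (u' i) + dist (v i) (v' i) + dist (dist (u i) (v i)) ε := by
        linarith [dist_dist_dist_le (u' i) (v' i) (u i) (v i), dist_comm (u i) (u' i),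
          dist_comm (v i) (v' i)]

theorem exists_tendsto_dist_nhdsGT_of_not_cauchySeq {y : ℕ → M}
    (hD : Tendsto (fun n => dist (y n) (y (n + 1))) atTop (𝓝 0)) (hy : ¬ CauchySeq y) :
    ∃ ε > 0, ∃ b : ℕ → ℕ, (∀ k, k ≤ b k) ∧
      Tendsto (fun k => dist (y k) (y (b k))) atTop (𝓝[>] ε) := by
  rw [Metric.cauchySeq_iff'] at hy
  push Not at hy
  obtain ⟨ε, hε, hfar⟩ := hy
  have hcross : ∀ k, ∃ j,
      dist (y k) (y (k + j)) ≤ ε / 2 ∧ ε / 2 < dist (y k) (y (k + (j + 1))) := by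
    intro k
    obtain ⟨n, hn, hεn⟩ := hfar k
    refine exists_le_lt_succ (u := fun j => dist (y k) (y (k + j))) (by simpa using (half_pos hε).le)
      ⟨n - k, ?_⟩
    simp only [Nat.add_sub_cancel' hn, dist_comm (y k)]
    linarith
  choose j hj_le hj_lt using hcross
  refine ⟨ε / 2, half_pos hε, fun k => k + (j k + 1), fun k => Nat.le_add_right _ _,
    tendsto_nhdsWithin_iff.2 ⟨?_, Eventually.of_forall hj_lt⟩⟩
  have hDj : Tendsto (fun k => dist (y (k + j k)) (y (k + (j k + 1)))) atTop (𝓝 0) :=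
    hD.comp (tendsto_atTop_mono (fun k => Nat.le_add_right k (j k)) tendsto_id)
  refine tendsto_of_tendsto_of_tendsto_of_le_of_le tendsto_const_nhds
    (by simpa using hDj.const_add (ε / 2)) (fun k => (hj_lt k).le) (fun k => ?_)
  calc dist (y k) (y (k + (j k + 1)))
      ≤ dist (y k) (y (k + j k)) + dist (y (k + j k)) (y (k + (j k + 1))) := dist_triangle _ _ _
    _ ≤ ε / 2 + dist (y (k + j k)) (y (k + (j k + 1))) := by gcongr; exact hj_le k

end MetricSpace

section Orbit

variable {M : Type*} [MetricSpace M] {ψ α β γ : ℝ → ℝ} {y : ℕ → M}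

/-- The contraction inequality of a pair `(S, T)` read along `y n = S (x n) = T (x (n + 1))`. -/
def ContractiveSeq (ψ α β γ : ℝ → ℝ) (y : ℕ → M) : Prop :=
  ∀ a b : ℕ, ψ (dist (y (a + 1)) (y (b + 1))) ≤
    α (dist (y a) (y b)) * ψ (dist (y a) (y b)) +
    β (dist (y a) (y b)) * ψ (dist (y a) (y (a + 1))) +
    γ (dist (y a) (y b)) * ψ (dist (y b) (y (b + 1)))

theorem ContractiveSeq.le_contractionRatio_mul (hy : ContractiveSeq ψ α β γ y)
    (hp : ParamCondition α β γ) (n : ℕ) :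
    ψ (dist (y (n + 1)) (y (n + 1 + 1))) ≤
      contractionRatio α β γ (dist (y n) (y (n + 1))) * ψ (dist (y n) (y (n + 1))) := by
  rw [contractionRatio, div_mul_eq_mul_div, le_div_iff₀ (hp.one_sub_pos dist_nonneg)]
  linarith [hy n (n + 1)]

theorem ContractiveSeq.le_mul_add {c : ℝ} (hy : ContractiveSeq ψ α β γ y)
    (hψ : AlteringDistance ψ) (hp : ParamCondition α β γ) {a b : ℕ}
    (hα : α (dist (y a) (y b)) ≤ c) :
    ψ (dist (y (a + 1)) (y (b + 1))) ≤
      c * ψ (dist (y a) (y b)) + ψ (dist (y a) (y (a + 1))) + ψ (dist (y b) (y (b + 1))) := by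
  set d := dist (y a) (y b)
  have hβ : β d ≤ 1 := (hp.2.1 d dist_nonneg).2.le
  have hγ : γ d ≤ 1 := (hp.2.2.1 d dist_nonneg).2.le
  calc ψ (dist (y (a + 1)) (y (b + 1)))
      ≤ α d * ψ d + β d * ψ (dist (y a) (y (a + 1))) + γ d * ψ (dist (y b) (y (b + 1))) :=
        hy a b
    _ ≤ c * ψ d + 1 * ψ (dist (y a) (y (a + 1))) + 1 * ψ (dist (y b) (y (b + 1))) := by
        gcongr <;> exact hψ.nonneg dist_nonneg
    _ = _ := by ring

theorem ContractiveSeq.cauchySeq (hy : ContractiveSeq ψ α β γ y)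
    (hψ : AlteringDistance ψ) (hp : ParamCondition α β γ) : CauchySeq y := by
  have hD : Tendsto (fun n => dist (y n) (y (n + 1))) atTop (𝓝 0) :=
    tendsto_zero_of_le_mul hψ (fun _ => hp.contractionRatio_lt_one)
      (fun _ => hp.exists_contractionRatio_le) (fun _ => dist_nonneg)
      (hy.le_contractionRatio_mul hp)
  by_contra hnot
  obtain ⟨ε, hε, b, hkb, hd⟩ := exists_tendsto_dist_nhdsGT_of_not_cauchySeq hD hnot
  obtain ⟨c, hc, hαc⟩ := hp.exists_contractionRatio_le hε
  have hDb := hD.comp (tendsto_atTop_mono hkb tendsto_id)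
  have hd₀ : Tendsto (fun k => dist (y k) (y (b k))) atTop (𝓝 ε) :=
    tendsto_nhds_of_tendsto_nhdsWithin hd
  have hd₁ : Tendsto (fun k => dist (y (k + 1)) (y (b k + 1))) atTop (𝓝 ε) :=
    tendsto_dist_of_tendsto_dist_zero hD hDb hd₀
  have hψD := hψ.tendsto_comp (fun _ => dist_nonneg) le_rfl hD
  have hψDb := hψ.tendsto_comp (fun _ => dist_nonneg) le_rfl hDb
  rw [hψ.map_zero] at hψD hψDb
  have hbound : ∀ᶠ k in atTop, ψ (dist (y (k + 1)) (y (b k + 1))) ≤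
      c * ψ (dist (y k) (y (b k))) + ψ (dist (y k) (y (k + 1))) +
        ψ (dist (y (b k)) (y (b k + 1))) := by
    filter_upwards [(tendsto_nhdsWithin_mono_right Ioi_subset_Ici_self hd).eventually hαc]
      with k hk
    exact hy.le_mul_add hψ hp ((hp.le_contractionRatio dist_nonneg).trans hk)
  have hψd₀ := hψ.tendsto_comp (fun _ => dist_nonneg) hε.le hd₀
  have hψd₁ := hψ.tendsto_comp (fun _ => dist_nonneg) hε.le hd₁
  have hlim : ψ ε ≤ c * ψ ε + 0 + 0 :=
    le_of_tendsto_of_tendsto hψd₁ (((hψd₀.const_mul c).add hψD).add hψDb) hbound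
  rw [add_zero, add_zero] at hlim
  exact hε.ne' (hψ.eq_zero_of_le_mul hε.le hc hlim)

end Orbit

theorem orbit_is_cauchy_general {M : Type*} [MetricSpace M] (S T : M → M)
    (ψ α β γ : ℝ → ℝ)
    (hST : ContractionPair S T ψ α β γ)
    (x : ℕ → M) (hx : ∀ n : ℕ, S (x n) = T (x (n + 1))) :
    CauchySeq (fun n => S (x n)) := by
  obtain ⟨hψ, hp, hcontr⟩ := hST
  have hy : ContractiveSeq ψ α β γ (fun n => S (x n)) := fun a b => by
    have h := hcontr (x (a + 1)) (x (b + 1))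
    rwa [← hx a, ← hx b, dist_comm (S (x (a + 1))) (S (x a)),
      dist_comm (S (x (b + 1))) (S (x b))] at h
  exact hy.cauchySeq hψ hp

/-- If `S(M) ⊆ T(M)` and `(S,T)` is a `ψ-(α,β,γ)`-contraction pair, then any sequence with
`S x_n = T x_{n+1}` yields a Cauchy sequence `y_n = S x_n`. -/
theorem orbit_is_cauchy {M : Type*} [MetricSpace M] (S T : M → M)
    (ψ α β γ : ℝ → ℝ)
    (hrange : Set.range S ⊆ Set.range T)
    (hST : ContractionPair S T ψ α β γ)
    (x : ℕ → M) (hx : ∀ n : ℕ, S (x n) = T (x (n + 1))) :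
    CauchySeq (fun n => S (x n)) :=
  orbit_is_cauchy_general S T ψ α β γ hST x hx
end
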